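/- Fix n ≥ 2 and W ≥ 1, and let A_n be the arena consisting of a single directed cycle v_0 → v_1 → ⋯ → v_{n−1} → v_0 in which all vertices belong to Player 0, v_0 is the initial vertex, the edge (v_{n−1}, v_0) is labelled R, and every other edge has weight −W. Then Player 0 wins (A_n, Recharge(w, cap)) if, and only if, cap ≥ (n−1)·W. In particular, the capacity bound (n−1)·W for winning recharge games is tight. -/

import Mathlib

/-- An arena: a directed graph without terminal vertices, a set `V0` of Player 0's
vertices (Player 1 controls the complement), and an initial vertex. -/
structure Arena (V : Type) where
  V0 : Set V
  E : V → V → Prop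
  vI : V
  succ : ∀ v, ∃ v', E v v'

/-- A play: an infinite path starting in the initial vertex. -/
def Arena.Play {V : Type} (A : Arena V) (ρ : ℕ → V) : Prop :=
  ρ 0 = A.vI ∧ ∀ n, A.E (ρ n) (ρ (n + 1))

/-- The play prefix `ρ 0 ⋯ ρ n` as a list. -/
def prefixList {V : Type} (ρ : ℕ → V) (n : ℕ) : List V :=
  (List.range (n + 1)).map ρ

/-- A strategy for the player controlling the vertices in `p`. -/
def Arena.IsStrategy {V : Type} (A : Arena V) (p : Set V) (σ : List V → V) : Prop :=
  ∀ (h : List V) (v : V), v ∈ p → A.E v (σ (h ++ [v]))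

/-- Consistency of a play with a strategy of the player controlling `p`. -/
def Arena.ConsistentWith {V : Type} (A : Arena V) (p : Set V) (σ : List V → V) (ρ : ℕ → V) : Prop :=
  ∀ n, ρ n ∈ p → ρ (n + 1) = σ (prefixList ρ n)

/-- `σ` is a winning strategy for the player controlling `p` with objective `Obj`. -/
def Arena.WinningStrategy {V : Type} (A : Arena V) (p : Set V) (Obj : Set (ℕ → V))
    (σ : List V → V) : Prop :=
  A.IsStrategy p σ ∧ ∀ ρ, A.Play ρ → A.ConsistentWith p σ ρ → ρ ∈ Obj

/-- Player 0 wins the game `(A, Win)`. -/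
def Arena.Player0Wins {V : Type} (A : Arena V) (Win : Set (ℕ → V)) : Prop :=
  ∃ σ, A.WinningStrategy A.V0 Win σ

/-- `h` is a finite play prefix consistent with the strategy `σ` of the player controlling `p`. -/
def Arena.FinPrefix {V : Type} (A : Arena V) (p : Set V) (σ : List V → V) (h : List V) : Prop :=
  ∃ ρ n, A.Play ρ ∧ A.ConsistentWith p σ ρ ∧ h = prefixList ρ n

/-- A positional strategy only depends on the last vertex. -/
def Positional {X : Type} (σ : List X → X) : Prop :=
  ∀ (h : List X) (v : X), σ (h ++ [v]) = σ [v]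

/-- The energy level of the play prefix `ρ 0 ⋯ ρ n` is `EL w ρ n`:
the sum of the weights of its `n` edges. -/
def EL {V : Type} (w : V → V → ℤ) (ρ : ℕ → V) (n : ℕ) : ℤ :=
  ∑ i ∈ Finset.range n, w (ρ i) (ρ (i + 1))

/-- The energy level of a finite play prefix given as a list. -/
def ELl {V : Type} (w : V → V → ℤ) : List V → ℤ
  | [] => 0
  | [_] => 0
  | a :: b :: l => w a b + ELl w (b :: l)

/-- The average accumulated energy of the first `n` prefixes. -/
noncomputable def avgEL {V : Type} (w : V → V → ℤ) (ρ : ℕ → V) (n : ℕ) : ℝ :=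
  (∑ i ∈ Finset.range n, (EL w ρ i : ℝ)) / (n : ℝ)

/-- The lower-bounded energy objective. -/
def EnergyL {V : Type} (w : V → V → ℤ) : Set (ℕ → V) :=
  {ρ | ∀ n, 0 ≤ EL w ρ n}

/-- The lower- and upper-bounded energy objective. -/
def EnergyLU {V : Type} (w : V → V → ℤ) (cap : ℕ) : Set (ℕ → V) :=
  {ρ | ∀ n, 0 ≤ EL w ρ n ∧ EL w ρ n ≤ (cap : ℤ)}

/-- The average-energy objective: limsup of the averages is at most `t`. -/
def AvgE {V : Type} (w : V → V → ℤ) (t : ℝ) : Set (ℕ → V) :=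
  {ρ | Filter.limsup (fun n => (avgEL w ρ n : EReal)) Filter.atTop ≤ (t : EReal)}

/-- The lower-bounded average-energy objective. -/
def AvgEnergyL {V : Type} (w : V → V → ℤ) (t : ℝ) : Set (ℕ → V) :=
  EnergyL w ∩ AvgE w t

/-- The mean-payoff objective. -/
def MP {V : Type} (w : V → V → ℤ) (t : ℝ) : Set (ℕ → V) :=
  {ρ | Filter.limsup (fun n => (((EL w ρ n : ℝ) / (n : ℝ)) : EReal)) Filter.atTop ≤ (t : EReal)}

/-- A memory structure: initial memory state and update along edges. -/
structure Mem (V M : Type) where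
  mI : M
  upd : M → V → V → M

/-- Tracking the memory state along a play. -/
def Mem.track {V M : Type} (mem : Mem V M) (ρ : ℕ → V) : ℕ → M
  | 0 => mem.mI
  | n + 1 => mem.upd (Mem.track mem ρ n) (ρ n) (ρ (n + 1))

def Mem.runAux {V M : Type} (mem : Mem V M) : M → List V → M
  | m, [] => m
  | m, [_] => m
  | m, a :: b :: l => Mem.runAux mem (mem.upd m a b) (b :: l)

/-- `Upd⁺`: the memory state reached along a finite play prefix. -/
def Mem.run {V M : Type} (mem : Mem V M) (h : List V) : M :=
  Mem.runAux mem mem.mI h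

/-- The strategy `σ` is implemented by the memory structure `mem`
(via some next-move function). -/
def Arena.ImplementedBy {V M : Type} (A : Arena V) (mem : Mem V M) (σ : List V → V) : Prop :=
  ∃ nxt : V → M → V, ∀ (h : List V) (v : V), σ (h ++ [v]) = nxt v (mem.run (h ++ [v]))

/-- `σ` is a finite-state strategy of size `k`. -/
def Arena.FiniteStateOfSize {V : Type} (A : Arena V) (k : ℕ) (σ : List V → V) : Prop :=
  ∃ (M : Type) (inst : Fintype M) (mem : Mem V M),
    @Fintype.card M inst = k ∧ A.ImplementedBy mem σ

/-- The expanded arena `A × M`. -/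
def Arena.expand {V M : Type} (A : Arena V) (mem : Mem V M) : Arena (V × M) where
  V0 := {p | p.1 ∈ A.V0}
  E := fun p q => A.E p.1 q.1 ∧ q.2 = mem.upd p.2 p.1 q.1
  vI := (A.vI, mem.mI)
  succ := fun p => by
    obtain ⟨v', h⟩ := A.succ p.1
    exact ⟨(v', mem.upd p.2 p.1 v'), h, rfl⟩

/-- The extended play in `A × M` corresponding to a play in `A`. -/
def extendPlay {V M : Type} (mem : Mem V M) (ρ : ℕ → V) : ℕ → V × M :=
  fun n => (ρ n, Mem.track mem ρ n)

/-- `(A, Win) ≤_M (A × M, Win')`. -/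
def Reduces {V M : Type} (A : Arena V) (mem : Mem V M) (Win : Set (ℕ → V))
    (Win' : Set (ℕ → V × M)) : Prop :=
  ∀ ρ, A.Play ρ → (ρ ∈ Win ↔ extendPlay mem ρ ∈ Win')

/-- A recharge weight function (`none` is the recharge label `R`) assigns
non-positive weights to all (non-recharge) edges. -/
def RechargeWeights {V : Type} (A : Arena V) (w : V → V → Option ℤ) : Prop :=
  ∀ u v, A.E u v → ∀ k : ℤ, w u v = some k → k ≤ 0

/-- The recharge energy level of the prefix `ρ 0 ⋯ ρ n`: the capacity plus the
accumulated weight since the last `R`-edge. -/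
def ELcap {V : Type} (w : V → V → Option ℤ) (cap : ℕ) (ρ : ℕ → V) : ℕ → ℤ
  | 0 => (cap : ℤ)
  | n + 1 =>
    match w (ρ n) (ρ (n + 1)) with
    | none => (cap : ℤ)
    | some k => ELcap w cap ρ n + k

/-- The recharge objective. -/
def Recharge {V : Type} (w : V → V → Option ℤ) (cap : ℕ) : Set (ℕ → V) :=
  {ρ | ∀ n, 0 ≤ ELcap w cap ρ n}

/-- The average of the recharge energy levels of the first `n` prefixes. -/
noncomputable def avgELcap {V : Type} (w : V → V → Option ℤ) (cap : ℕ) (ρ : ℕ → V)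
    (n : ℕ) : ℝ :=
  (∑ i ∈ Finset.range n, (ELcap w cap ρ i : ℝ)) / (n : ℝ)

/-- The average-bounded recharge objective. -/
def AvgRecharge {V : Type} (w : V → V → Option ℤ) (cap : ℕ) (t : ℝ) : Set (ℕ → V) :=
  {ρ | Filter.limsup (fun n => (avgELcap w cap ρ n : EReal)) Filter.atTop ≤ (t : EReal)} ∩
    Recharge w cap

/-- The (max-)parity objective: the maximal color occurring infinitely often is even. -/
def ParityObj {V : Type} (Ω : V → ℕ) : Set (ℕ → V) :=
  {ρ | ∃ c, Even c ∧ {n | Ω (ρ n) = c}.Infinite ∧ ∀ d, {n | Ω (ρ n) = d}.Infinite → d ≤ c}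

/-- The cycle arena on `n = m + 2 ≥ 2` vertices: all vertices belong to Player 0,
each vertex `v` has the unique successor `v + 1`, and the initial vertex is `0`. -/
def cycleArena (m : ℕ) : Arena (Fin (m + 2)) where
  V0 := Set.univ
  E := fun u v => v = u + 1
  vI := 0
  succ := fun u => ⟨u + 1, rfl⟩

/-- The recharge weight function of the cycle: the edge leaving the last vertex is
labelled `R`, all other edges have weight `-W`. -/
def cycleW (m W : ℕ) : Fin (m + 2) → Fin (m + 2) → Option ℤ :=
  fun u _ => if u = Fin.last (m + 1) then none else some (-(W : ℤ))


/- When every vertex has a single successor the play is unique and every strategy is consistent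
with it, so Player 0 wins iff that play is winning. On the cycle the play is `n ↦ n mod (m + 2)`,
and its recharge energy level after `n` steps is `cap - (n mod (m + 2)) * W`; the minimum
`cap - (m + 1) * W` is reached just before the recharge edge. -/

open Fin.NatCast

lemma prefixList_eq_append {V : Type} (ρ : ℕ → V) (n : ℕ) :
    prefixList ρ n = (List.range n).map ρ ++ [ρ n] := by
  simp [prefixList, List.range_succ]

namespace Arena

variable {V : Type} (A : Arena V)

lemma exists_isStrategy (p : Set V) : ∃ σ, A.IsStrategy p σ :=
  ⟨fun l => Classical.choose (A.succ (l.getLast?.getD A.vI)), fun h v _ => by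
    simpa using Classical.choose_spec (A.succ ((h ++ [v]).getLast?.getD A.vI))⟩

variable {A}

lemma consistentWith_of_deterministic (hdet : ∀ u v v', A.E u v → A.E u v' → v = v')
    {p : Set V} {σ : List V → V} (hσ : A.IsStrategy p σ) {ρ : ℕ → V} (hρ : A.Play ρ) :
    A.ConsistentWith p σ ρ := fun n hn => by
  rw [prefixList_eq_append]
  exact hdet _ _ _ (hρ.2 n) (hσ _ _ hn)

theorem player0Wins_iff_of_deterministic (hdet : ∀ u v v', A.E u v → A.E u v' → v = v')
    (Win : Set (ℕ → V)) : A.Player0Wins Win ↔ ∀ ρ, A.Play ρ → ρ ∈ Win := by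
  constructor
  · rintro ⟨σ, hσ, hwin⟩ ρ hρ
    exact hwin ρ hρ (consistentWith_of_deterministic hdet hσ hρ)
  · intro hwin
    obtain ⟨σ, hσ⟩ := A.exists_isStrategy A.V0
    exact ⟨σ, hσ, fun ρ hρ _ => hwin ρ hρ⟩

end Arena

lemma cycleArena_deterministic (m : ℕ) (u v v' : Fin (m + 2)) :
    (cycleArena m).E u v → (cycleArena m).E u v' → v = v' :=
  fun hv hv' => hv.trans hv'.symm

lemma cycleArena_play_iff (m : ℕ) (ρ : ℕ → Fin (m + 2)) :
    (cycleArena m).Play ρ ↔ ρ = fun n : ℕ => (n : Fin (m + 2)) := by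
  constructor
  · rintro ⟨h0, hstep⟩
    funext n
    induction n with
    | zero => exact h0
    | succ n ih => rw [hstep n, ih, Nat.cast_succ]
  · rintro rfl
    exact ⟨Nat.cast_zero, fun n => Nat.cast_succ n⟩

lemma ELcap_cycleW_natCast (m W cap n : ℕ) :
    ELcap (cycleW m W) cap (fun k : ℕ => (k : Fin (m + 2))) n =
      cap - ((n : Fin (m + 2)) : ℕ) * W := by
  induction n with
  | zero => simp [ELcap]
  | succ n ih =>
    rw [ELcap, Nat.cast_succ, Fin.val_add_one]
    by_cases hlast : (n : Fin (m + 2)) = Fin.last (m + 1)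
    · simp [cycleW, hlast]
    · simp only [cycleW, hlast, if_false, ih]
      push_cast
      ring

theorem cycle_recharge_iff_general (m W : ℕ) (cap : ℕ) :
    (cycleArena m).Player0Wins (Recharge (cycleW m W) cap) ↔ (m + 1) * W ≤ cap := by
  rw [Arena.player0Wins_iff_of_deterministic (cycleArena_deterministic m)]
  simp only [cycleArena_play_iff, forall_eq]
  change (∀ n, 0 ≤ ELcap _ _ _ n) ↔ _
  simp only [ELcap_cycleW_natCast, sub_nonneg]
  constructor
  · intro h
    have hval : (((m + 1 : ℕ) : Fin (m + 2)) : ℕ) = m + 1 := Fin.val_cast_of_lt (by omega)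
    exact_mod_cast hval ▸ h (m + 1)
  · intro hcap n
    have hle : ((n : Fin (m + 2)) : ℕ) * W ≤ (m + 1) * W :=
      Nat.mul_le_mul_right W (Fin.is_le _)
    exact_mod_cast hle.trans hcap

/-- For `n = m + 2 ≥ 2` and `W ≥ 1`, Player 0 wins the cycle
recharge game with capacity `cap` iff `cap ≥ (n - 1)·W`; thus the capacity bound
`(n-1)·W` is tight. -/
theorem cycle_recharge_iff (m W : ℕ) (hW : 1 ≤ W) (cap : ℕ) :
    (cycleArena m).Player0Wins (Recharge (cycleW m W) cap) ↔ (m + 1) * W ≤ cap :=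
  cycle_recharge_iff_general m W cap
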